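/- Assume 0 < μ < 1/L_f and 0 < β < 2, and consider the inexact gradient descent iterates: given x⁰, z⁰ ∈ ℝⁿ, for each k ≥ 0 let x^{k+1} be the unique minimizer of x ↦ ⟨∇f(x^k), x⟩ + h(x) + ‖x − z^k‖²/(2μ), let x_{μg}(z^k) be the proximal point of g at z^k, and set z^{k+1} = z^k + β(x^{k+1} − x_{μg}(z^k)). Define ξ^{k+1} = ∇f(x^{k+1}) − ∇f(x^k) − (x^{k+1} − x_{μg}(z^k))/μ, the potential ℱ(x, z) = f(x) + h(x) + ‖x − z‖²/(2μ) − M_{μg}(z), and the constants c₁ = (μ^{-1} − L_f)/2, c₂ = (1/β − 1/2)/μ. Then for every integer K ≥ 1 there exists k̄ ∈ {0, …, K−1} such that ξ^{k̄+1} ∈ ∇f(x^{k̄+1}) + ∂h(x^{k̄+1}) − ∂g(x_{μg}(z^{k̄})) and max{ ‖ξ^{k̄+1}‖, ‖x_{μg}(z^{k̄}) − x^{k̄+1}‖ } ≤ ( L_f + (μ^{-1} + 1)/β ) · ( (ℱ(x⁰, z⁰) − F*) / (min{c₁, c₂} K) )^{1/2}. -/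

import Mathlib

open scoped RealInnerProductSpace

noncomputable section

/-- `ℝⁿ` with the Euclidean norm. -/
abbrev En (n : ℕ) := EuclideanSpace ℝ (Fin n)

/-- `h` is proper: finite somewhere and never `⊥`. -/
def ProperE {n : ℕ} (h : En n → EReal) : Prop :=
  (∃ x, h x ≠ ⊤) ∧ ∀ x, h x ≠ ⊥

/-- Convexity of an extended-real-valued function. -/
def ConvexE {n : ℕ} (h : En n → EReal) : Prop :=
  ∀ x y : En n, ∀ a b : ℝ, 0 ≤ a → 0 ≤ b → a + b = 1 →
    h (a • x + b • y) ≤ (a : EReal) * h x + (b : EReal) * h y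

/-- `Mφ` is the Moreau envelope of `φ` with parameter `μ` and `xφ` the associated
(unique) proximal mapping. -/
def IsMoreau {n : ℕ} (φ : En n → EReal) (μ : ℝ) (Mφ : En n → ℝ) (xφ : En n → En n) : Prop :=
  ∀ z : En n,
    (Mφ z : EReal) = φ (xφ z) + ((‖xφ z - z‖ ^ 2 / (2 * μ) : ℝ) : EReal) ∧
    (∀ x, (Mφ z : EReal) ≤ φ x + ((‖x - z‖ ^ 2 / (2 * μ) : ℝ) : EReal)) ∧
    (∀ x, φ x + ((‖x - z‖ ^ 2 / (2 * μ) : ℝ) : EReal) = (Mφ z : EReal) → x = xφ z)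

/-- Real-valued version, for the convex function `g`. -/
def IsMoreauR {n : ℕ} (g : En n → ℝ) (μ : ℝ) (Mg : En n → ℝ) (xg : En n → En n) : Prop :=
  ∀ z : En n,
    Mg z = g (xg z) + ‖xg z - z‖ ^ 2 / (2 * μ) ∧
    (∀ x, Mg z ≤ g x + ‖x - z‖ ^ 2 / (2 * μ)) ∧
    (∀ x, g x + ‖x - z‖ ^ 2 / (2 * μ) = Mg z → x = xg z)

/-- `ξ ∈ ∂g(x)` for a (finite-valued) convex function `g`. -/
def ConvexSubgradAt {n : ℕ} (g : En n → ℝ) (ξ x : En n) : Prop :=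
  ∀ y, g x + ⟪ξ, y - x⟫ ≤ g y

/-- `ξ ∈ ∂h(x)` for a proper convex extended-real-valued `h`. -/
def ESubgradAt {n : ℕ} (h : En n → EReal) (ξ x : En n) : Prop :=
  ∀ y, h x + ((⟪ξ, y - x⟫ : ℝ) : EReal) ≤ h y

/-- The potential function `ℱ(x,z) = f(x) + h(x) + ‖x−z‖²/(2μ) − M_{μg}(z)`. -/
def potF {n : ℕ} (f : En n → ℝ) (h : En n → EReal) (Mg : En n → ℝ) (μ : ℝ)
    (x z : En n) : EReal :=
  h x + ((f x + ‖x - z‖ ^ 2 / (2 * μ) - Mg z : ℝ) : EReal)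

/-!
Along the iteration the potential `ℱ(x, z)` decreases by at least
`c₁ ‖x^{k+1} - x^k‖² + c₂ ‖z^{k+1} - z^k‖²`. This combines the descent lemma for `f`, the
optimality of `x^{k+1}` for its `μ⁻¹`-strongly convex subproblem, and the gradient inequality
`M_{μg}(z') ≥ M_{μg}(z) + ⟪(z - x_{μg}(z)) / μ, z' - z⟫` of the Moreau envelope. Since
`M_{μg}(z) ≤ g(x) + ‖x - z‖² / (2μ)`, the potential stays above `F*`, so telescoping yields an
index whose decrease is at most `(ℱ(x⁰, z⁰) - F*) / K`, and this bounds both residuals. The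
subgradients come from the two optimality conditions:
`(z^k - x^{k+1}) / μ - ∇f(x^k) ∈ ∂h(x^{k+1})` and `(z^k - x_{μg}(z^k)) / μ ∈ ∂g(x_{μg}(z^k))`.
-/

open Filter Topology in
theorem le_of_forall_pos_le_add_mul {a b c : ℝ} (H : ∀ t : ℝ, 0 < t → t ≤ 1 → a ≤ b + t * c) :
    a ≤ b := by
  have hlim : Tendsto (fun t => b + t * c) (𝓝[>] 0) (𝓝 b) := by
    have : Continuous (fun t : ℝ => b + t * c) := by fun_prop
    simpa using (this.tendsto 0).mono_left nhdsWithin_le_nhds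
  exact ge_of_tendsto hlim <| by
    filter_upwards [Ioc_mem_nhdsGT one_pos] with t ht using H t ht.1 ht.2

theorem exists_lt_le_div_of_add_le {Φ D : ℕ → ℝ} {m : ℝ} (hstep : ∀ k, Φ (k + 1) + D k ≤ Φ k)
    (hlow : ∀ k, m ≤ Φ k) {K : ℕ} (hK : 0 < K) : ∃ k < K, D k ≤ (Φ 0 - m) / K := by
  have hsum : ∑ k ∈ Finset.range K, D k ≤ ∑ k ∈ Finset.range K, (Φ 0 - m) / K := by
    rw [Finset.sum_const, Finset.card_range, nsmul_eq_mul,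
      mul_div_cancel₀ _ (Nat.cast_ne_zero.2 hK.ne')]
    calc ∑ k ∈ Finset.range K, D k ≤ ∑ k ∈ Finset.range K, (Φ k - Φ (k + 1)) :=
          Finset.sum_le_sum fun k _ => by linarith [hstep k]
      _ = Φ 0 - Φ K := Finset.sum_range_sub' Φ K
      _ ≤ Φ 0 - m := by linarith [hlow K]
  obtain ⟨k, hk, hD⟩ := Finset.exists_le_of_sum_le (Finset.nonempty_range_iff.2 hK.ne') hsum
  exact ⟨k, Finset.mem_range.1 hk, hD⟩

theorem le_sqrt_div_min_of_add_le {c₁ c₂ a b T : ℝ} (hc₁ : 0 < c₁) (hc₂ : 0 < c₂)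
    (h : c₁ * a ^ 2 + c₂ * b ^ 2 ≤ T) :
    a ≤ √(T / min c₁ c₂) ∧ b ≤ √(T / min c₁ c₂) := by
  have hc : 0 < min c₁ c₂ := lt_min hc₁ hc₂
  constructor <;> refine Real.le_sqrt_of_sq_le ((le_div_iff₀ hc).2 ?_)
  · nlinarith [min_le_left c₁ c₂, sq_nonneg a, sq_nonneg b]
  · nlinarith [min_le_right c₁ c₂, sq_nonneg a, sq_nonneg b]

theorem ne_top_of_coe_add_le_coe_add {a b : ℝ} {p q : EReal} (hpq : (a : EReal) + p ≤ b + q)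
    (hq : q ≠ ⊤) : p ≠ ⊤ := by
  rintro rfl
  rw [EReal.coe_add_top, top_le_iff] at hpq
  exact EReal.add_ne_top (EReal.coe_ne_top b) hq hpq

section InnerProductSpace

variable {E : Type*} [NormedAddCommGroup E] [InnerProductSpace ℝ E]

theorem ConvexOn.add_inner_le_of_isMinOn {s : Set E} {ψ : E → ℝ} (hψ : ConvexOn ℝ s ψ)
    {μ : ℝ} (hμ : 0 < μ) {z p : E} (hps : p ∈ s)
    (hp : IsMinOn (fun w => ψ w + ‖w - z‖ ^ 2 / (2 * μ)) s p) {y : E} (hy : y ∈ s) :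
    ψ p + μ⁻¹ * ⟪z - p, y - p⟫ ≤ ψ y := by
  refine le_of_forall_pos_le_add_mul (c := ‖y - p‖ ^ 2 / (2 * μ)) fun t ht0 ht1 => ?_
  have hmem : p + t • (y - p) ∈ s := hψ.1.add_smul_sub_mem hps hy ⟨ht0.le, ht1⟩
  have hconv : ψ (p + t • (y - p)) ≤ (1 - t) * ψ p + t * ψ y := by
    have := hψ.2 hps hy (sub_nonneg.2 ht1) ht0.le (by ring)
    rwa [show (1 - t) • p + t • y = p + t • (y - p) by module] at this
  have hmin : ψ p + ‖p - z‖ ^ 2 / (2 * μ)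
      ≤ ψ (p + t • (y - p)) + ‖p + t • (y - p) - z‖ ^ 2 / (2 * μ) := hp hmem
  have hsq : ‖p + t • (y - p) - z‖ ^ 2 / (2 * μ) = ‖p - z‖ ^ 2 / (2 * μ)
      - t * (μ⁻¹ * ⟪z - p, y - p⟫) + t * (t * (‖y - p‖ ^ 2 / (2 * μ))) := by
    rw [show p + t • (y - p) - z = (p - z) + t • (y - p) by abel, norm_add_sq_real,
      real_inner_smul_right, norm_smul, mul_pow, Real.norm_eq_abs, sq_abs,
      ← neg_sub p z, inner_neg_left]
    field_simp
    ring
  have key : t * (ψ p + μ⁻¹ * ⟪z - p, y - p⟫) ≤ t * (ψ y + t * (‖y - p‖ ^ 2 / (2 * μ))) := by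
    linarith
  exact le_of_mul_le_mul_left key ht0

theorem le_add_inner_add_sq_of_lipschitz_gradient [CompleteSpace E] {f : E → ℝ} {f' : E → E}
    {L : ℝ} (hf : ∀ x, HasGradientAt f (f' x) x) (hL : ∀ x y, ‖f' x - f' y‖ ≤ L * ‖x - y‖)
    (x y : E) :
    f y ≤ f x + ⟪f' x, y - x⟫ + L / 2 * ‖y - x‖ ^ 2 := by
  set d := y - x
  let G : ℝ → ℝ := fun t => f (x + t • d) - t * ⟪f' x, d⟫ - L / 2 * t ^ 2 * ‖d‖ ^ 2
  have hG : ∀ t, HasDerivAt G (⟪f' (x + t • d), d⟫ - ⟪f' x, d⟫ - L * t * ‖d‖ ^ 2) t := by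
    intro t
    have hline : HasDerivAt (fun t : ℝ => x + t • d) d t := by
      simpa using ((hasDerivAt_id t).smul_const d).const_add x
    have hcomp : HasDerivAt (fun t => f (x + t • d)) ⟪f' (x + t • d), d⟫ t :=
      (hf _).hasFDerivAt.comp_hasDerivAt t hline
    have hsq : HasDerivAt (fun t : ℝ => t ^ 2) (2 * t) t := by simpa using hasDerivAt_pow 2 t
    exact ((hcomp.sub ((hasDerivAt_id t).mul_const ⟪f' x, d⟫)).sub
      ((hsq.const_mul (L / 2)).mul_const (‖d‖ ^ 2))).congr_deriv (by ring)
  have hG' : ∀ t ∈ interior (Set.Ici (0 : ℝ)),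
      ⟪f' (x + t • d), d⟫ - ⟪f' x, d⟫ - L * t * ‖d‖ ^ 2 ≤ 0 := by
    intro t ht
    rw [interior_Ici, Set.mem_Ioi] at ht
    have hlip : ‖f' (x + t • d) - f' x‖ ≤ L * (t * ‖d‖) := by
      simpa [norm_smul, abs_of_pos ht] using hL (x + t • d) x
    have := (real_inner_le_norm (f' (x + t • d) - f' x) d).trans
      (mul_le_mul_of_nonneg_right hlip (norm_nonneg d))
    rw [inner_sub_left] at this
    linarith
  have hanti : AntitoneOn G (Set.Ici 0) :=
    antitoneOn_of_hasDerivWithinAt_nonpos (convex_Ici 0)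
      (fun t _ => (hG t).continuousAt.continuousWithinAt)
      (fun t _ => (hG t).hasDerivWithinAt) hG'
  have := hanti Set.self_mem_Ici (show (0 : ℝ) ≤ 1 from zero_le_one) zero_le_one
  simp only [G, zero_smul, one_smul, add_zero, one_pow, one_mul, zero_mul, sub_zero,
    d, add_sub_cancel] at this
  linarith

end InnerProductSpace

section ProximalGradient

variable {n : ℕ} {f : En n → ℝ} {f' : En n → En n} {h : En n → EReal} {g : En n → ℝ}
  {μ : ℝ} {Mg : En n → ℝ} {xg : En n → En n}

theorem ConvexE.convexOn_toReal (hh : ConvexE h) (hbot : ∀ x, h x ≠ ⊥) :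
    ConvexOn ℝ {x | h x ≠ ⊤} (fun x => (h x).toReal) := by
  have key : ∀ x, h x ≠ ⊤ → ∀ y, h y ≠ ⊤ → ∀ a b : ℝ, 0 ≤ a → 0 ≤ b → a + b = 1 →
      h (a • x + b • y) ≤ ((a * (h x).toReal + b * (h y).toReal : ℝ) : EReal) := by
    intro x hx y hy a b ha hb hab
    have := hh x y a b ha hb hab
    rwa [← EReal.coe_toReal hx (hbot x), ← EReal.coe_toReal hy (hbot y), ← EReal.coe_mul,
      ← EReal.coe_mul, ← EReal.coe_add] at this
  refine ⟨fun x hx y hy a b ha hb hab => ne_top_of_le_ne_top (EReal.coe_ne_top _)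
    (key x hx y hy a b ha hb hab), fun x hx y hy a b ha hb hab => ?_⟩
  have := EReal.toReal_le_toReal (key x hx y hy a b ha hb hab) (hbot _) (EReal.coe_ne_top _)
  rwa [EReal.toReal_coe] at this

theorem esubgradAt_of_forall_le (hh : ConvexE h) (hbot : ∀ x, h x ≠ ⊥)
    (hμ : 0 < μ) {v z p : En n} (hp : h p ≠ ⊤)
    (hmin : ∀ w, ((⟪v, p⟫ + ‖p - z‖ ^ 2 / (2 * μ) : ℝ) : EReal) + h p ≤
      ((⟪v, w⟫ + ‖w - z‖ ^ 2 / (2 * μ) : ℝ) : EReal) + h w) :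
    ESubgradAt h (μ⁻¹ • (z - p) - v) p := by
  have hψ : ConvexOn ℝ {x | h x ≠ ⊤} (fun w => ⟪v, w⟫ + (h w).toReal) :=
    ((innerₛₗ ℝ v).convexOn (hh.convexOn_toReal hbot).1).add (hh.convexOn_toReal hbot)
  have hpmin : IsMinOn (fun w => ⟪v, w⟫ + (h w).toReal + ‖w - z‖ ^ 2 / (2 * μ))
      {x | h x ≠ ⊤} p := by
    refine isMinOn_iff.2 fun w hw => ?_
    have := hmin w
    rw [← EReal.coe_toReal hp (hbot p), ← EReal.coe_toReal hw (hbot w), ← EReal.coe_add,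
      ← EReal.coe_add, EReal.coe_le_coe_iff] at this
    linarith
  intro y
  by_cases hy : h y = ⊤
  · simp [hy]
  have := hψ.add_inner_le_of_isMinOn hμ hp hpmin hy
  rw [← EReal.coe_toReal hp (hbot p), ← EReal.coe_toReal hy (hbot y), ← EReal.coe_add,
    EReal.coe_le_coe_iff, inner_sub_left, real_inner_smul_left, inner_sub_right v y p]
  linarith

theorem IsMoreauR.convexSubgradAt (hprox : IsMoreauR g μ Mg xg) (hg : ConvexOn ℝ Set.univ g)
    (hμ : 0 < μ) (z : En n) : ConvexSubgradAt g (μ⁻¹ • (z - xg z)) (xg z) := by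
  have hmin : IsMinOn (fun w => g w + ‖w - z‖ ^ 2 / (2 * μ)) Set.univ (xg z) :=
    isMinOn_iff.2 fun w _ => (hprox z).1 ▸ (hprox z).2.1 w
  intro y
  simpa only [real_inner_smul_left] using
    hg.add_inner_le_of_isMinOn hμ (Set.mem_univ _) hmin (Set.mem_univ y)

theorem IsMoreauR.add_inner_le (hprox : IsMoreauR g μ Mg xg) (hg : ConvexOn ℝ Set.univ g)
    (hμ : 0 < μ) (z z' : En n) : Mg z + μ⁻¹ * ⟪z - xg z, z' - z⟫ ≤ Mg z' := by
  rw [(hprox z).1, (hprox z').1, norm_sub_rev (xg z), norm_sub_rev (xg z')]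
  have hsub := hprox.convexSubgradAt hg hμ z (xg z')
  rw [real_inner_smul_left] at hsub
  have hsplit : ⟪z - xg z, z' - z⟫
      = ⟪z - xg z, xg z' - xg z⟫ + ⟪z - xg z, z' - xg z'⟫ - ‖z - xg z‖ ^ 2 := by
    rw [← real_inner_self_eq_norm_sq, ← inner_add_right, ← inner_sub_right]
    congr 1
    abel
  have hsq : 0 ≤ ‖(z' - xg z') - (z - xg z)‖ ^ 2 / (2 * μ) := by positivity
  have hexpand : ‖z - xg z‖ ^ 2 / (2 * μ) + μ⁻¹ * (⟪z - xg z, z' - xg z'⟫ - ‖z - xg z‖ ^ 2)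
      + ‖(z' - xg z') - (z - xg z)‖ ^ 2 / (2 * μ) = ‖z' - xg z'‖ ^ 2 / (2 * μ) := by
    rw [norm_sub_sq_real (z' - xg z'), real_inner_comm (z' - xg z')]
    field_simp
    ring
  rw [hsplit]
  linarith

theorem potF_toReal {x : En n} (hx : h x ≠ ⊤) (hbot : h x ≠ ⊥) (z : En n) :
    (potF f h Mg μ x z).toReal = f x + (h x).toReal + ‖x - z‖ ^ 2 / (2 * μ) - Mg z := by
  rw [potF, EReal.toReal_add hx hbot (EReal.coe_ne_top _) (EReal.coe_ne_bot _), EReal.toReal_coe]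
  ring

theorem le_potF_toReal {Fstar : ℝ}
    (hFstar : ∀ x, (Fstar : EReal) ≤ ((f x : ℝ) : EReal) + h x - ((g x : ℝ) : EReal))
    (hprox : IsMoreauR g μ Mg xg) {x : En n} (hx : h x ≠ ⊤) (hbot : h x ≠ ⊥) (z : En n) :
    Fstar ≤ (potF f h Mg μ x z).toReal := by
  have := hFstar x
  rw [← EReal.coe_toReal hx hbot, ← EReal.coe_add, ← EReal.coe_sub, EReal.coe_le_coe_iff] at this
  rw [potF_toReal hx hbot]
  linarith [(hprox z).2.1 x]

theorem potF_toReal_add_le {L β : ℝ} (hf : ∀ x, HasGradientAt f (f' x) x)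
    (hL : ∀ x y, ‖f' x - f' y‖ ≤ L * ‖x - y‖) (hh : ConvexE h) (hbot : ∀ x, h x ≠ ⊥)
    (hprox : IsMoreauR g μ Mg xg) (hg : ConvexOn ℝ Set.univ g) (hμ : 0 < μ) (hβ : β ≠ 0)
    {x z x' z' : En n} (hx : h x ≠ ⊤) (hx' : h x' ≠ ⊤)
    (hmin : ∀ w, ((⟪f' x, x'⟫ + ‖x' - z‖ ^ 2 / (2 * μ) : ℝ) : EReal) + h x' ≤
      ((⟪f' x, w⟫ + ‖w - z‖ ^ 2 / (2 * μ) : ℝ) : EReal) + h w)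
    (hz' : z' = z + β • (x' - xg z)) :
    (potF f h Mg μ x' z').toReal
        + ((μ⁻¹ - L) / 2 * ‖x' - x‖ ^ 2 + (1 / β - 1 / 2) / μ * ‖z' - z‖ ^ 2)
      ≤ (potF f h Mg μ x z).toReal := by
  rw [potF_toReal hx' (hbot x'), potF_toReal hx (hbot x)]
  have hsub := esubgradAt_of_forall_le hh hbot hμ hx' hmin x
  rw [← EReal.coe_toReal hx' (hbot x'), ← EReal.coe_toReal hx (hbot x), ← EReal.coe_add,
    EReal.coe_le_coe_iff, inner_sub_left, real_inner_smul_left] at hsub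
  have hdesc := le_add_inner_add_sq_of_lipschitz_gradient hf hL x x'
  have hM := hprox.add_inner_le hg hμ z z'
  have hxz : ‖x - z‖ ^ 2 = ‖x' - x‖ ^ 2 - 2 * ⟪z - x', x - x'⟫ + ‖x' - z‖ ^ 2 := by
    rw [show x - z = (x - x') - (z - x') by abel, norm_sub_sq_real, norm_sub_rev x x',
      norm_sub_rev z x', real_inner_comm (z - x')]
  have hxz' : ‖x' - z'‖ ^ 2 = ‖x' - z‖ ^ 2 - 2 * ⟪x' - z, z' - z⟫ + ‖z' - z‖ ^ 2 := by
    rw [show x' - z' = (x' - z) - (z' - z) by abel, norm_sub_sq_real]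
  have hstep : ⟪x' - z, z' - z⟫ + ⟪z - xg z, z' - z⟫ = ‖z' - z‖ ^ 2 / β := by
    have : x' - xg z = β⁻¹ • (z' - z) := by
      rw [hz', add_sub_cancel_left, smul_smul, inv_mul_cancel₀ hβ, one_smul]
    rw [← inner_add_left, show x' - z + (z - xg z) = x' - xg z by abel, this,
      real_inner_smul_left, real_inner_self_eq_norm_sq, div_eq_inv_mul]
  have hv : ⟪f' x, x' - x⟫ = -⟪f' x, x - x'⟫ := by rw [← inner_neg_right, neg_sub]
  linear_combination hdesc + hsub + hM + hv + (1 / (2 * μ)) * (hxz' - hxz) - μ⁻¹ * hstep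

theorem max_norm_le_of_lipschitz {L β r : ℝ} (hL₀ : 0 ≤ L) (hμ : 0 < μ) (hβ : 0 < β)
    (hL : ∀ x y, ‖f' x - f' y‖ ≤ L * ‖x - y‖) {x x' u : En n} (hx : ‖x' - x‖ ≤ r)
    (hu : ‖β • (x' - u)‖ ≤ r) :
    max ‖f' x' - f' x - μ⁻¹ • (x' - u)‖ ‖u - x'‖ ≤ (L + (μ⁻¹ + 1) / β) * r := by
  have hr : 0 ≤ r := (norm_nonneg _).trans hx
  have hu' : ‖x' - u‖ ≤ r / β := by
    rw [norm_smul, Real.norm_of_nonneg hβ.le] at hu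
    rw [le_div_iff₀ hβ]
    linarith
  have hξ : ‖f' x' - f' x - μ⁻¹ • (x' - u)‖ ≤ L * r + μ⁻¹ * (r / β) :=
    calc ‖f' x' - f' x - μ⁻¹ • (x' - u)‖ ≤ ‖f' x' - f' x‖ + ‖μ⁻¹ • (x' - u)‖ := norm_sub_le _ _
      _ ≤ L * r + μ⁻¹ * (r / β) := by
        rw [norm_smul, Real.norm_of_nonneg (inv_nonneg.2 hμ.le)]
        gcongr
        exact (hL _ _).trans (by gcongr)
  have hsplit : (L + (μ⁻¹ + 1) / β) * r = L * r + μ⁻¹ * (r / β) + r / β := by ring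
  have hrβ : 0 ≤ r / β := div_nonneg hr hβ.le
  have hμrβ : 0 ≤ μ⁻¹ * (r / β) := by positivity
  have hLr : 0 ≤ L * r := mul_nonneg hL₀ hr
  rw [norm_sub_rev u x', hsplit]
  exact max_le (by linarith) (by linarith)

end ProximalGradient

theorem stmt16_general {n : ℕ} (f : En n → ℝ) (f' : En n → En n) (Lf : ℝ) (hLf : 0 < Lf)
    (hfdiff : ∀ x, HasGradientAt f (f' x) x)
    (hfLip : ∀ x y : En n, ‖f' x - f' y‖ ≤ Lf * ‖x - y‖)
    (h : En n → EReal) (hhproper : ProperE h)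
    (hhconv : ConvexE h)
    (g : En n → ℝ) (hg : ConvexOn ℝ Set.univ g)
    (μ β : ℝ) (hμ0 : 0 < μ) (hμ1 : μ < 1 / Lf) (hβ0 : 0 < β) (hβ2 : β < 2)
    (Fstar : ℝ)
    (hmin : ∃ xs : En n, ((f xs : ℝ) : EReal) + h xs - ((g xs : ℝ) : EReal) = (Fstar : EReal) ∧
      ∀ x, (Fstar : EReal) ≤ ((f x : ℝ) : EReal) + h x - ((g x : ℝ) : EReal))
    (Mg : En n → ℝ) (xg : En n → En n) (hgprox : IsMoreauR g μ Mg xg)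
    (x z : ℕ → En n)
    (hx : ∀ k : ℕ, ∀ w : En n,
      ((⟪f' (x k), x (k + 1)⟫ + ‖x (k + 1) - z k‖ ^ 2 / (2 * μ) : ℝ) : EReal) + h (x (k + 1)) ≤
        ((⟪f' (x k), w⟫ + ‖w - z k‖ ^ 2 / (2 * μ) : ℝ) : EReal) + h w)
    (hz : ∀ k : ℕ, z (k + 1) = z k + β • (x (k + 1) - xg (z k)))
    (F0 : ℝ) (hF0 : potF f h Mg μ (x 0) (z 0) = (F0 : EReal)) :
    ∀ K : ℕ, 1 ≤ K → ∃ kb < K,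
      (∃ ξh ξg : En n, ESubgradAt h ξh (x (kb + 1)) ∧ ConvexSubgradAt g ξg (xg (z kb)) ∧
        f' (x (kb + 1)) - f' (x kb) - μ⁻¹ • (x (kb + 1) - xg (z kb)) =
          f' (x (kb + 1)) + ξh - ξg) ∧
      max ‖f' (x (kb + 1)) - f' (x kb) - μ⁻¹ • (x (kb + 1) - xg (z kb))‖
          ‖xg (z kb) - x (kb + 1)‖ ≤
        (Lf + (μ⁻¹ + 1) / β) *
          Real.sqrt ((F0 - Fstar) / (min ((μ⁻¹ - Lf) / 2) ((1 / β - 1 / 2) / μ) * K)) := by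
  intro K hK
  obtain ⟨-, -, hFstar⟩ := hmin
  have hc₁ : 0 < (μ⁻¹ - Lf) / 2 := by
    rw [one_div, lt_inv_comm₀ hμ0 hLf] at hμ1
    linarith
  have hc₂ : 0 < (1 / β - 1 / 2) / μ :=
    div_pos (sub_pos.2 (one_div_lt_one_div_of_lt hβ0 hβ2)) hμ0
  have hfin : ∀ k, h (x k) ≠ ⊤ := by
    intro k
    induction k with
    | zero =>
      intro htop
      simp only [potF, htop, EReal.top_add_coe] at hF0
      exact EReal.top_ne_coe F0 hF0
    | succ k ih => exact ne_top_of_coe_add_le_coe_add (hx k (x k)) ih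
  obtain ⟨k, hk, hD⟩ := exists_lt_le_div_of_add_le
    (fun k => potF_toReal_add_le hfdiff hfLip hhconv hhproper.2 hgprox hg hμ0 hβ0.ne'
      (hfin k) (hfin (k + 1)) (hx k) (hz k))
    (fun k => le_potF_toReal hFstar hgprox (hfin k) (hhproper.2 _) (z k)) hK
  rw [hF0, EReal.toReal_coe] at hD
  obtain ⟨hdx, hdz⟩ := le_sqrt_div_min_of_add_le hc₁ hc₂ hD
  rw [hz k, add_sub_cancel_left] at hdz
  refine ⟨k, hk, ⟨_, _, esubgradAt_of_forall_le hhconv hhproper.2 hμ0 (hfin (k + 1)) (hx k),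
    hgprox.convexSubgradAt hg hμ0 (z k), by module⟩, ?_⟩
  rw [mul_comm _ (K : ℝ), ← div_div]
  exact max_norm_le_of_lipschitz hLf.le hμ0 hβ0 hfLip hdx hdz

/-- convergence rate of the inexact gradient descent on `F_μ`
(Algorithm 1). -/
theorem stmt16 {n : ℕ} (f : En n → ℝ) (f' : En n → En n) (Lf : ℝ) (hLf : 0 < Lf)
    (hfdiff : ∀ x, HasGradientAt f (f' x) x)
    (hfLip : ∀ x y : En n, ‖f' x - f' y‖ ≤ Lf * ‖x - y‖)
    (h : En n → EReal) (hhproper : ProperE h) (hhlsc : LowerSemicontinuous h)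
    (hhconv : ConvexE h)
    (g : En n → ℝ) (hg : ConvexOn ℝ Set.univ g)
    (μ β : ℝ) (hμ0 : 0 < μ) (hμ1 : μ < 1 / Lf) (hβ0 : 0 < β) (hβ2 : β < 2)
    (Fstar : ℝ)
    (hmin : ∃ xs : En n, ((f xs : ℝ) : EReal) + h xs - ((g xs : ℝ) : EReal) = (Fstar : EReal) ∧
      ∀ x, (Fstar : EReal) ≤ ((f x : ℝ) : EReal) + h x - ((g x : ℝ) : EReal))
    (Mg : En n → ℝ) (xg : En n → En n) (hgprox : IsMoreauR g μ Mg xg)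
    (x z : ℕ → En n)
    (hx : ∀ k : ℕ, ∀ w : En n,
      ((⟪f' (x k), x (k + 1)⟫ + ‖x (k + 1) - z k‖ ^ 2 / (2 * μ) : ℝ) : EReal) + h (x (k + 1)) ≤
        ((⟪f' (x k), w⟫ + ‖w - z k‖ ^ 2 / (2 * μ) : ℝ) : EReal) + h w)
    (hz : ∀ k : ℕ, z (k + 1) = z k + β • (x (k + 1) - xg (z k)))
    (F0 : ℝ) (hF0 : potF f h Mg μ (x 0) (z 0) = (F0 : EReal)) :
    ∀ K : ℕ, 1 ≤ K → ∃ kb < K,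
      (∃ ξh ξg : En n, ESubgradAt h ξh (x (kb + 1)) ∧ ConvexSubgradAt g ξg (xg (z kb)) ∧
        f' (x (kb + 1)) - f' (x kb) - μ⁻¹ • (x (kb + 1) - xg (z kb)) =
          f' (x (kb + 1)) + ξh - ξg) ∧
      max ‖f' (x (kb + 1)) - f' (x kb) - μ⁻¹ • (x (kb + 1) - xg (z kb))‖
          ‖xg (z kb) - x (kb + 1)‖ ≤
        (Lf + (μ⁻¹ + 1) / β) *
          Real.sqrt ((F0 - Fstar) / (min ((μ⁻¹ - Lf) / 2) ((1 / β - 1 / 2) / μ) * K)) :=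
  stmt16_general f f' Lf hLf hfdiff hfLip h hhproper hhconv g hg μ β hμ0 hμ1 hβ0 hβ2 Fstar hmin Mg
    xg hgprox x z hx hz F0 hF0
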